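/- The parameter τ_cp(M) is a lower bound on the CP-rank: for every completely positive matrix M, τ_cp(M) ≤ rank_cp(M). -/

import Mathlib

/-!
If `M = ∑_{ℓ < r} a_ℓ a_ℓᵀ` with `a_ℓ ≥ 0`, each `a_ℓ a_ℓᵀ` obeys the constraints in the definition
of `τ_cp`, because `M - a_ℓ a_ℓᵀ` is the sum of the other terms; so `r⁻¹ • M` is their barycentre.
The zero matrix obeys them too, hence the hull is star-shaped about `0` and contains `l⁻¹ • M` for
every `l ≥ r`. This also covers `r = 0`, where `M = 0`.
-/

noncomputable def cpRank {m : ℕ} (M : Matrix (Fin m) (Fin m) ℝ) : ℕ :=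
  sInf {r : ℕ | ∃ a : Fin r → Fin m → ℝ,
    (∀ ℓ i, 0 ≤ a ℓ i) ∧ M = ∑ ℓ, Matrix.vecMulVec (a ℓ) (a ℓ)}

noncomputable def tauCP {m : ℕ} (M : Matrix (Fin m) (Fin m) ℝ) : ℝ :=
  sInf {l : ℝ | 0 < l ∧ l⁻¹ • M ∈ convexHull ℝ
    {X : Matrix (Fin m) (Fin m) ℝ | ∃ x : Fin m → ℝ,
      (∀ i, 0 ≤ x i) ∧ (M - Matrix.vecMulVec x x).PosSemidef ∧
      (∀ i j, x i * x j ≤ M i j) ∧ X = Matrix.vecMulVec x x}}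

open Matrix Finset

variable {n ι : Type*} [Fintype ι]

theorem apply_eq_sum_of_eq_sum {M : Matrix n n ℝ} {a : ι → n → ℝ}
    (hM : M = ∑ ℓ, vecMulVec (a ℓ) (a ℓ)) (i j : n) : M i j = ∑ ℓ, a ℓ i * a ℓ j := by
  simp [hM, Matrix.sum_apply, vecMulVec_apply]

variable [Fintype n]

/-- The set whose convex hull appears in `tauCP`. -/
def cpAtoms (M : Matrix n n ℝ) : Set (Matrix n n ℝ) :=
  {X | ∃ x : n → ℝ, (∀ i, 0 ≤ x i) ∧ (M - vecMulVec x x).PosSemidef ∧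
    (∀ i j, x i * x j ≤ M i j) ∧ X = vecMulVec x x}

theorem posSemidef_vecMulVec_self (x : n → ℝ) : (vecMulVec x x).PosSemidef := by
  simpa using posSemidef_vecMulVec_self_star x

section Decomposition

variable {M : Matrix n n ℝ} {a : ι → n → ℝ}
  (ha : ∀ ℓ i, 0 ≤ a ℓ i) (hM : M = ∑ ℓ, vecMulVec (a ℓ) (a ℓ))
include ha hM

theorem zero_mem_cpAtoms : (0 : Matrix n n ℝ) ∈ cpAtoms M := by
  refine ⟨0, fun _ => le_rfl, ?_, fun i j => ?_, by simp⟩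
  · simpa [hM] using posSemidef_sum univ fun ℓ _ => posSemidef_vecMulVec_self (a ℓ)
  · simpa [apply_eq_sum_of_eq_sum hM] using
      sum_nonneg fun ℓ _ => mul_nonneg (ha ℓ i) (ha ℓ j)

theorem vecMulVec_mem_cpAtoms (k : ι) : vecMulVec (a k) (a k) ∈ cpAtoms M := by
  classical
  refine ⟨a k, ha k, ?_, fun i j => ?_, rfl⟩
  · have hrest : M - vecMulVec (a k) (a k) = ∑ ℓ ∈ univ.erase k, vecMulVec (a ℓ) (a ℓ) := by
      rw [hM, ← add_sum_erase _ _ (mem_univ k), add_sub_cancel_left]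
    rw [hrest]
    exact posSemidef_sum _ fun ℓ _ => posSemidef_vecMulVec_self (a ℓ)
  · rw [apply_eq_sum_of_eq_sum hM]
    exact single_le_sum (f := fun ℓ => a ℓ i * a ℓ j)
      (fun ℓ _ => mul_nonneg (ha ℓ i) (ha ℓ j)) (mem_univ k)

theorem inv_card_smul_mem_convexHull_cpAtoms [Nonempty ι] :
    (Fintype.card ι : ℝ)⁻¹ • M ∈ convexHull ℝ (cpAtoms M) := by
  have h := univ.centerMass_mem_convexHull (w := fun _ => (1 : ℝ)) (fun _ _ => zero_le_one)
    (by simp [Fintype.card_pos]) fun k _ => vecMulVec_mem_cpAtoms ha hM k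
  simpa [centerMass, ← hM] using h

theorem inv_smul_mem_convexHull_cpAtoms {l : ℝ} (hl : Fintype.card ι ≤ l) (hl₀ : 0 < l) :
    l⁻¹ • M ∈ convexHull ℝ (cpAtoms M) := by
  have h₀ := subset_convexHull ℝ _ (zero_mem_cpAtoms ha hM)
  rcases isEmpty_or_nonempty ι with _ | _
  · simpa [hM] using h₀
  have hr : 0 < (Fintype.card ι : ℝ) := by exact_mod_cast Fintype.card_pos
  have hscale : l⁻¹ • M = (Fintype.card ι / l) • (Fintype.card ι : ℝ)⁻¹ • M := by
    rw [smul_smul]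
    congr 1
    field_simp
  rw [hscale]
  exact (convex_convexHull ℝ _).smul_mem_of_zero_mem h₀
    (inv_card_smul_mem_convexHull_cpAtoms ha hM) ⟨by positivity, div_le_one_of_le₀ hl hl₀.le⟩

end Decomposition

theorem tauCP_le_of_eq_sum {m : ℕ} {M : Matrix (Fin m) (Fin m) ℝ} {a : ι → Fin m → ℝ}
    (ha : ∀ ℓ i, 0 ≤ a ℓ i) (hM : M = ∑ ℓ, vecMulVec (a ℓ) (a ℓ)) :
    tauCP M ≤ Fintype.card ι :=
  le_of_forall_gt_imp_ge_of_dense fun l hl =>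
    have hl₀ : 0 < l := (Nat.cast_nonneg _).trans_lt hl
    csInf_le ⟨0, fun _ h => h.1.le⟩ ⟨hl₀, inv_smul_mem_convexHull_cpAtoms ha hM hl.le hl₀⟩

theorem tauCP_le_cpRank {m : ℕ} (M : Matrix (Fin m) (Fin m) ℝ)
    (hM : ∃ (r : ℕ) (a : Fin r → Fin m → ℝ),
      (∀ ℓ i, 0 ≤ a ℓ i) ∧ M = ∑ ℓ, Matrix.vecMulVec (a ℓ) (a ℓ)) :
    tauCP M ≤ (cpRank M : ℝ) := by
  obtain ⟨a, ha, hMa⟩ := Nat.sInf_mem hM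
  have h := tauCP_le_of_eq_sum ha hMa
  rwa [Fintype.card_fin] at h
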